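/- arXiv:1209.3275 — 3 statements merged into one kernel-verified Lean document; each statement's English description precedes it below -/
import Mathlib

section
/- The multiple-control Toffoli gates on n lines generate the full symmetric group on {0,1}^n. -/
/-- The action of a multiple-control Toffoli gate with target line `t` and
polarity pattern `p` on the control lines: flip the target bit iff every
other line matches the pattern. -/
def mcToffoliFun (n : ℕ) (t : Fin n) (p : Fin n → Bool) (x : Fin n → Bool) :
    Fin n → Bool :=
  if ∀ j, j ≠ t → x j = p j then Function.update x t (!(x t)) else x

theorem mcToffoliFun_involutive (n : ℕ) (t : Fin n) (p : Fin n → Bool) :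
    Function.Involutive (mcToffoliFun n t p) := by
  intro x
  unfold mcToffoliFun
  by_cases h : ∀ j, j ≠ t → x j = p j
  · have h2 : ∀ j, j ≠ t → Function.update x t (!(x t)) j = p j := by
      intro j hj
      rw [Function.update_of_ne hj]
      exact h j hj
  
    simp [if_pos h, if_pos h2, Function.update_idem]
  · simp [if_neg h]

/-- A multiple-control Toffoli gate as a permutation of `{0,1}ⁿ`. -/
def mcToffoliPerm (n : ℕ) (t : Fin n) (p : Fin n → Bool) :
    Equiv.Perm (Fin n → Bool) :=
  (mcToffoliFun_involutive n t p).toPerm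

/-- The set of all multiple-control Toffoli gates on `n` lines. -/
def mcToffoliSet (n : ℕ) : Set (Equiv.Perm (Fin n → Bool)) :=
  {σ | ∃ t p, σ = mcToffoliPerm n t p}

/-!
Each gate `mcToffoliPerm n t p` is the transposition of `p` and its neighbour in the
hypercube across coordinate `t`. Flipping coordinates one at a time connects any two
bit-strings, so the generated group acts transitively, and a transitive permutation group
generated by transpositions is the full symmetric group.
-/

open Equiv MulAction Function

theorem Set.eq_univ_of_forall_update_mem {ι : Type*} {β : ι → Type*} [Fintype ι]
    [DecidableEq ι] {S : Set (∀ i, β i)} {y : ∀ i, β i} (hy : y ∈ S)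
    (hS : ∀ x ∈ S, ∀ i b, update x i b ∈ S) : S = Set.univ := by
  refine Set.eq_univ_of_forall fun x => ?_
  have piecewise_mem (s : Finset ι) : s.piecewise x y ∈ S := by
    induction s using Finset.induction_on with
    | empty => simpa using hy
    | insert i s _ ih => simpa [Finset.piecewise_insert] using hS _ ih i (x i)
  simpa using piecewise_mem Finset.univ

theorem isPretransitive_of_update_mem_orbit {ι β : Type*} [Fintype ι] [DecidableEq ι]
    (G : Subgroup (Perm (ι → β))) (hG : ∀ (x : ι → β) i b, update x i b ∈ orbit G x) :
    IsPretransitive G (ι → β) := by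
  refine ⟨fun x y => ?_⟩
  have orbit_eq_univ : orbit G x = Set.univ :=
    Set.eq_univ_of_forall_update_mem (mem_orbit_self x) fun z hz i b =>
      orbit_eq_iff.mpr hz ▸ hG z i b
  exact mem_orbit_iff.mp (orbit_eq_univ ▸ Set.mem_univ y)

theorem forall_ne_apply_eq_iff_eq_or_eq_update_not {ι : Type*} [DecidableEq ι] (t : ι)
    (p z : ι → Bool) : (∀ j, j ≠ t → z j = p j) ↔ z = p ∨ z = update p t (!p t) := by
  have agree_off_t : (∀ j, j ≠ t → z j = p j) ↔ z = update p t (z t) := by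
    simp [eq_update_iff]
  rw [agree_off_t]
  rcases Bool.eq_or_eq_not (z t) (p t) with h | h <;> rw [h]
  · simp only [update_eq_self, iff_self_or]
    rintro rfl
    simp at h
  · simp only [iff_or_self]
    rintro rfl
    simp at h

theorem mcToffoliPerm_eq_swap (n : ℕ) (t : Fin n) (p : Fin n → Bool) :
    mcToffoliPerm n t p = swap p (update p t (!p t)) := by
  ext1 z
  simp only [mcToffoliPerm, Involutive.coe_toPerm, mcToffoliFun,
    forall_ne_apply_eq_iff_eq_or_eq_update_not]
  split_ifs with h
  · rcases h with rfl | rfl <;> simp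
  · rw [not_or] at h
    exact (swap_apply_of_ne_of_ne h.1 h.2).symm

theorem mcToffoliPerm_isSwap (n : ℕ) (t : Fin n) (p : Fin n → Bool) :
    (mcToffoliPerm n t p).IsSwap :=
  ⟨_, _, fun h => by simpa using congrFun h t, mcToffoliPerm_eq_swap n t p⟩

theorem update_mem_orbit_closure_mcToffoliSet (n : ℕ) (x : Fin n → Bool) (t : Fin n)
    (b : Bool) : update x t b ∈ orbit (Subgroup.closure (mcToffoliSet n)) x := by
  rcases Bool.eq_or_eq_not b (x t) with rfl | rfl
  · simp [mem_orbit_self]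
  · refine ⟨⟨_, Subgroup.subset_closure ⟨t, x, rfl⟩⟩, ?_⟩
    simp [mcToffoliPerm_eq_swap]

/-- The multiple-control Toffoli gates on `n` lines generate the full symmetric
group on `{0,1}ⁿ`. -/
theorem mcToffoli_generates (n : ℕ) :
    Subgroup.closure (mcToffoliSet n) = (⊤ : Subgroup (Equiv.Perm (Fin n → Bool))) := by
  have := isPretransitive_of_update_mem_orbit _ (update_mem_orbit_closure_mcToffoliSet n)
  refine closure_of_isSwap_of_isPretransitive ?_
  rintro _ ⟨t, p, rfl⟩
  exact mcToffoliPerm_isSwap n t p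
end

section
/- The generalized Toffoli gates on n lines (n ≥ 2) generate the full symmetric group on {0,1}^n. -/
/-- The action of a generalized Toffoli gate with target line `t` and set `S`
of (positive) control lines: flip the target bit iff every control carries 1. -/
def gToffoliFun (n : ℕ) (t : Fin n) (S : Finset (Fin n)) (x : Fin n → Bool) :
    Fin n → Bool :=
  if ∀ j ∈ S, x j = true then Function.update x t (!(x t)) else x

theorem gToffoliFun_involutive (n : ℕ) (t : Fin n) (S : Finset (Fin n))
    (ht : t ∉ S) : Function.Involutive (gToffoliFun n t S) := by
  intro x
  unfold gToffoliFun
  by_cases h : ∀ j ∈ S, x j = true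
  · have h2 : ∀ j ∈ S, Function.update x t (!(x t)) j = true := by
      intro j hj
      rw [Function.update_of_ne (by rintro rfl; exact ht hj)]
      exact h j hj
    simp [if_pos h, if_pos h2, Function.update_idem]
  · simp [if_neg h]

/-- A generalized Toffoli gate as a permutation of `{0,1}ⁿ`. -/
def gToffoliPerm (n : ℕ) (t : Fin n) (S : Finset (Fin n)) (ht : t ∉ S) :
    Equiv.Perm (Fin n → Bool) :=
  (gToffoliFun_involutive n t S ht).toPerm

/-- The set of all generalized Toffoli gates on `n` lines. -/
def gToffoliSet (n : ℕ) : Set (Equiv.Perm (Fin n → Bool)) :=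
  {σ | ∃ t S, ∃ ht : t ∉ S, σ = gToffoliPerm n t S ht}


/-! The gates without controls generate the bit-flip translations `x ↦ x ⊕ a`, which act
transitively on `{0,1}ⁿ`, and the gate whose controls are all the other lines is the
transposition of one edge of the hypercube `{0,1}ⁿ`. Conjugating it by translations yields the
transposition of every hypercube edge, and the transpositions along the edges of a connected graph
generate the full symmetric group of its vertex set. -/

open Equiv Finset

section BitFlips

variable {ι : Type*} [DecidableEq ι]

def flipBits (A : Finset ι) (x : ι → Bool) : ι → Bool :=
  fun j => if j ∈ A then !x j else x j

theorem flipBits_flipBits (A B : Finset ι) (x : ι → Bool) :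
    flipBits A (flipBits B x) = flipBits (symmDiff A B) x := by
  funext j
  by_cases hA : j ∈ A <;> by_cases hB : j ∈ B <;> simp [flipBits, mem_symmDiff, hA, hB]

theorem flipBits_comm (A B : Finset ι) (x : ι → Bool) :
    flipBits A (flipBits B x) = flipBits B (flipBits A x) := by
  rw [flipBits_flipBits, flipBits_flipBits, symmDiff_comm]

theorem flipBits_involutive (A : Finset ι) : Function.Involutive (flipBits A) := by
  intro x
  funext j
  by_cases hA : j ∈ A <;> simp [flipBits, hA]

theorem update_not_eq_flipBits_singleton (x : ι → Bool) (t : ι) :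
    Function.update x t (!x t) = flipBits {t} x := by
  funext j
  by_cases hj : j = t
  · subst hj; simp [flipBits]
  · simp [flipBits, hj]

theorem flipBits_singleton_ne (x : ι → Bool) (t : ι) : x ≠ flipBits {t} x :=
  fun h => by simpa [flipBits] using congrFun h t

def flipPerm (A : Finset ι) : Perm (ι → Bool) :=
  (flipBits_involutive A).toPerm

@[simp]
theorem flipPerm_apply (A : Finset ι) (x : ι → Bool) : flipPerm A x = flipBits A x :=
  rfl

theorem flipPerm_mul (A B : Finset ι) : flipPerm A * flipPerm B = flipPerm (symmDiff A B) :=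
  Perm.ext fun x => flipBits_flipBits A B x

theorem flipPerm_empty : flipPerm (∅ : Finset ι) = 1 :=
  Perm.ext fun x => funext fun j => by simp [flipBits]

theorem flipPerm_insert {a : ι} {A : Finset ι} (ha : a ∉ A) :
    flipPerm (insert a A) = flipPerm {a} * flipPerm A := by
  rw [flipPerm_mul, (disjoint_singleton_left.2 ha).symmDiff_eq_sup, sup_eq_union, insert_eq]

variable [Fintype ι]

theorem flipBits_filter_ne (x y : ι → Bool) :
    flipBits {j | x j ≠ y j} x = y := by
  funext j
  cases hx : x j <;> cases hy : y j <;> simp [flipBits, hx, hy]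

variable (ι) in
def hypercubeSwaps : Set (Perm (ι → Bool)) :=
  {σ | ∃ x t, σ = swap x (flipBits {t} x)}

theorem exists_mem_closure_hypercubeSwaps_apply_eq_flipBits (A : Finset ι) (x : ι → Bool) :
    ∃ g ∈ Subgroup.closure (hypercubeSwaps ι), g x = flipBits A x := by
  induction A using Finset.induction_on with
  | empty => exact ⟨1, Subgroup.one_mem _, by simp [← flipPerm_apply, flipPerm_empty]⟩
  | @insert a A ha ih =>
    obtain ⟨g, hg, hgx⟩ := ih
    refine ⟨swap (g x) (flipBits {a} (g x)) * g,
      Subgroup.mul_mem _ (Subgroup.subset_closure ⟨g x, a, rfl⟩) hg, ?_⟩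
    rw [Perm.mul_apply, swap_apply_left, hgx, ← flipPerm_apply (insert a A), flipPerm_insert ha]
    rfl

instance :
    MulAction.IsPretransitive (Subgroup.closure (hypercubeSwaps ι)) (ι → Bool) where
  exists_smul_eq x y := by
    obtain ⟨g, hg, hgx⟩ := exists_mem_closure_hypercubeSwaps_apply_eq_flipBits {j | x j ≠ y j} x
    exact ⟨⟨g, hg⟩, hgx.trans (flipBits_filter_ne x y)⟩

theorem closure_hypercubeSwaps : Subgroup.closure (hypercubeSwaps ι) = ⊤ :=
  closure_of_isSwap_of_isPretransitive fun _ ⟨x, t, hσ⟩ =>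
    ⟨x, _, flipBits_singleton_ne x t, hσ⟩

/-- Conjugating by `flipPerm {j | y j ≠ x j}` moves the edge at `y` to the edge at `x`. -/
theorem swap_flipBits_mem {K : Subgroup (Perm (ι → Bool))}
    (hK : ∀ A, flipPerm A ∈ K) {B : Finset ι} {y : ι → Bool}
    (hy : swap y (flipBits B y) ∈ K) (x : ι → Bool) : swap x (flipBits B x) ∈ K := by
  set π := flipPerm {j | y j ≠ x j}
  have hπy : π y = x := flipBits_filter_ne y x
  have hπ : π (flipBits B y) = flipBits B x := by
    show flipBits _ (flipBits B y) = _
    rw [flipBits_comm, flipBits_filter_ne]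
  rw [← hπ, ← hπy, swap_apply_apply]
  exact K.mul_mem (K.mul_mem (hK _) hy) (K.inv_mem (hK _))

end BitFlips

theorem gToffoliPerm_empty (n : ℕ) (t : Fin n) (ht : t ∉ (∅ : Finset (Fin n))) :
    gToffoliPerm n t ∅ ht = flipPerm {t} :=
  Perm.ext fun x => by
    simp [gToffoliPerm, gToffoliFun, update_not_eq_flipBits_singleton]

theorem flipPerm_mem_closure_gToffoliSet (n : ℕ) (A : Finset (Fin n)) :
    flipPerm A ∈ Subgroup.closure (gToffoliSet n) := by
  induction A using Finset.induction_on with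
  | empty => exact flipPerm_empty (ι := Fin n) ▸ Subgroup.one_mem _
  | @insert a A ha ih =>
    rw [flipPerm_insert ha, ← gToffoliPerm_empty n a (notMem_empty a)]
    exact Subgroup.mul_mem _ (Subgroup.subset_closure ⟨a, ∅, _, rfl⟩) ih

theorem gToffoliPerm_erase_eq_swap (n : ℕ) (t : Fin n) :
    gToffoliPerm n t (univ.erase t) (notMem_erase t _) =
      swap (fun _ => true) (flipBits {t} fun _ => true) := by
  refine Perm.ext fun x => ?_
  simp only [gToffoliPerm, Function.Involutive.coe_toPerm, gToffoliFun, mem_erase, mem_univ,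
    and_true, update_not_eq_flipBits_singleton]
  by_cases hx : ∀ j ≠ t, x j = true
  · rw [if_pos hx]
    cases hxt : x t
    · have hx_eq : x = flipBits {t} fun _ => true := by
        funext j
        by_cases hjt : j = t <;> simp [flipBits, hjt, hxt, hx]
      rw [hx_eq, swap_apply_right, flipBits_involutive]
    · have hx_eq : x = fun _ => true := by
        funext j
        by_cases hjt : j = t <;> simp [hjt, hxt, hx]
      rw [hx_eq, swap_apply_left]
  · rw [if_neg hx]
    obtain ⟨j, hjt, hxj⟩ := not_forall₂.1 hx
    refine (swap_apply_of_ne_of_ne ?_ ?_).symm <;> intro h <;> simp [h, flipBits, hjt] at hxj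

theorem gToffoli_generates_general (n : ℕ) :
    Subgroup.closure (gToffoliSet n) = (⊤ : Subgroup (Equiv.Perm (Fin n → Bool))) := by
  rw [eq_top_iff, ← closure_hypercubeSwaps, Subgroup.closure_le]
  rintro _ ⟨x, t, rfl⟩
  refine swap_flipBits_mem (y := fun _ => true) (flipPerm_mem_closure_gToffoliSet n) ?_ x
  rw [← gToffoliPerm_erase_eq_swap]
  exact Subgroup.subset_closure ⟨t, _, _, rfl⟩

/-- For `n ≥ 2`, the generalized Toffoli gates on `n` lines generate the full
symmetric group on `{0,1}ⁿ`. -/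
theorem gToffoli_generates (n : ℕ) (hn : 2 ≤ n) :
    Subgroup.closure (gToffoliSet n) = (⊤ : Subgroup (Equiv.Perm (Fin n → Bool))) :=
  gToffoli_generates_general n
end

section
/- The reverse permutation ρ on {0,1}^n, defined by bitwise complement ρ(x) = x̄ (equivalently ρ(i) = 2^n − 1 − i), satisfies ∑_{x∈{0,1}^n} d_H(ρ(x), x) = n·2^n; consequently any factorization of ρ into MC-Toffoli transpositions requires at least n·2^(n-1) gates. -/
/-- The reverse (bitwise complement) permutation of `{0,1}ⁿ`. -/
def revPerm (n : ℕ) : Equiv.Perm (Fin n → Bool) :=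
  Function.Involutive.toPerm (fun x i => !(x i)) (by intro x; funext i; simp)

/-!
Sum the Hamming displacement `∑ₓ d(σ x, x)` over all inputs. By the triangle inequality this sum
is subadditive under composition, and an MC-Toffoli gate moves only the two strings that agree
with its control pattern off the target line, each by distance one, so a gate contributes at
most `2`. Complementation moves each of the `2ⁿ` strings by distance `n`.
-/

open Finset

section Displacement

variable {ι β : Type*} [Fintype ι] [DecidableEq ι] [DecidableEq β]

theorem hammingDist_update_le_one (x : ι → β) (t : ι) (b : β) :
    hammingDist (Function.update x t b) x ≤ 1 := by
  refine (card_le_card fun i hi => ?_).trans (card_singleton t).le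
  by_contra hit
  exact (mem_filter.1 hi).2 (Function.update_of_ne (mem_singleton.not.1 hit) b x)

variable [Fintype β]

def hammingDisplacement (σ : Equiv.Perm (ι → β)) : ℕ :=
  ∑ x, hammingDist (σ x) x

theorem hammingDisplacement_mul_le (σ τ : Equiv.Perm (ι → β)) :
    hammingDisplacement (σ * τ) ≤ hammingDisplacement σ + hammingDisplacement τ := by
  unfold hammingDisplacement
  calc ∑ x, hammingDist (σ (τ x)) x
      ≤ ∑ x, (hammingDist (σ (τ x)) (τ x) + hammingDist (τ x) x) :=
        sum_le_sum fun x _ => hammingDist_triangle _ _ _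
    _ = ∑ y, hammingDist (σ y) y + ∑ x, hammingDist (τ x) x := by
        rw [sum_add_distrib, Equiv.sum_comp τ (fun y => hammingDist (σ y) y)]

theorem hammingDisplacement_list_prod_le {c : ℕ} (l : List (Equiv.Perm (ι → β)))
    (hl : ∀ σ ∈ l, hammingDisplacement σ ≤ c) :
    hammingDisplacement l.prod ≤ c * l.length := by
  induction l with
  | nil => simp [hammingDisplacement]
  | cons σ l ih =>
    rw [List.prod_cons, List.length_cons, Nat.mul_succ, add_comm (c * _)]
    exact (hammingDisplacement_mul_le σ l.prod).trans <|
      Nat.add_le_add (hl σ List.mem_cons_self) (ih fun τ hτ => hl τ (List.mem_cons_of_mem σ hτ))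

end Displacement

theorem hammingDisplacement_mcToffoliPerm_le (n : ℕ) (t : Fin n) (p : Fin n → Bool) :
    hammingDisplacement (mcToffoliPerm n t p) ≤ 2 := by
  set matching := univ.filter fun y : Fin n → Bool => ∀ j, j ≠ t → y j = p j
  have hdist : ∀ y, hammingDist (mcToffoliPerm n t p y) y ≤ if y ∈ matching then 1 else 0 := by
    intro y
    change hammingDist (mcToffoliFun n t p y) y ≤ _
    unfold mcToffoliFun
    split_ifs with h h' h'
    · exact hammingDist_update_le_one y t _
    · exact absurd (mem_filter.2 ⟨mem_univ y, h⟩) h'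
    · exact absurd (mem_filter.1 h').2 h
    · rw [hammingDist_self]
  -- a matching string is determined by its target bit
  have hmatching : matching ⊆ univ.image fun b => Function.update p t b := by
    intro y hy
    refine mem_image.2 ⟨y t, mem_univ _, funext fun j => ?_⟩
    by_cases hj : j = t
    · subst hj; simp
    · rw [Function.update_of_ne hj, (mem_filter.1 hy).2 j hj]
  calc hammingDisplacement (mcToffoliPerm n t p)
      ≤ ∑ y, if y ∈ matching then 1 else 0 := sum_le_sum fun y _ => hdist y
    _ = #matching := by rw [sum_boole, filter_mem_eq_inter, univ_inter, Nat.cast_id]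
    _ ≤ #(univ : Finset Bool) := (card_le_card hmatching).trans card_image_le
    _ = 2 := rfl

theorem hammingDisplacement_revPerm (n : ℕ) : hammingDisplacement (revPerm n) = n * 2 ^ n := by
  have hdist : ∀ x : Fin n → Bool, hammingDist (revPerm n x) x = n := fun x => by
    change hammingDist (fun i => !(x i)) x = n
    simp [hammingDist]
  simp [hammingDisplacement, hdist, mul_comm]

/-- The reverse permutation has total Hamming displacement `n * 2 ^ n`, hence
any factorization of it into MC-Toffoli gates uses at least `n * 2 ^ (n - 1)`
gates. -/
theorem revPerm_displacement_and_lower_bound (n : ℕ) :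
    (∑ x : Fin n → Bool, hammingDist (revPerm n x) x = n * 2 ^ n) ∧
    (∀ l : List (Equiv.Perm (Fin n → Bool)), (∀ σ ∈ l, σ ∈ mcToffoliSet n) →
      l.prod = revPerm n → n * 2 ^ (n - 1) ≤ l.length) := by
  refine ⟨hammingDisplacement_revPerm n, fun l hl hprod => ?_⟩
  have hgates : ∀ σ ∈ l, hammingDisplacement σ ≤ 2 := fun σ hσ => by
    obtain ⟨t, p, rfl⟩ := hl σ hσ
    exact hammingDisplacement_mcToffoliPerm_le n t p
  have hbound := hammingDisplacement_list_prod_le l hgates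
  rw [hprod, hammingDisplacement_revPerm] at hbound
  have htwice : n * 2 ^ n = 2 * (n * 2 ^ (n - 1)) := by
    cases n with
    | zero => rfl
    | succ m => rw [Nat.add_sub_cancel, pow_succ]; ring
  omega
end
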